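/- arXiv:1805.02538 — 6 statements merged into one kernel-verified Lean document; each statement's English description precedes it below -/
import Mathlib

section
/- For every finite family of nonempty closed bounded intervals in the real line, i.e. intervals I_1, ..., I_n with I_i = [a_i, b_i] and a_i ≤ b_i, there exists a coloring c : {1,...,n} → {0,1} with two colors that is non-monochromatic: for every point p ∈ ℝ that is contained in at least two of the intervals, there exist indices i and j with p ∈ I_i, p ∈ I_j and c(i) ≠ c(j). -/
/-- Any finite family of nonempty closed bounded intervals in ℝ admits a
non-monochromatic coloring with two colors: every point contained in at least
two of the intervals is contained in two intervals of different colors. -/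
theorem nm_coloring_intervals_two_colors
    (n : ℕ) (a b : Fin n → ℝ) (hab : ∀ i, a i ≤ b i) :
    ∃ c : Fin n → Fin 2,
      ∀ p : ℝ,
        (∃ i j : Fin n, i ≠ j ∧ p ∈ Set.Icc (a i) (b i) ∧ p ∈ Set.Icc (a j) (b j)) →
        ∃ i j : Fin n, p ∈ Set.Icc (a i) (b i) ∧ p ∈ Set.Icc (a j) (b j) ∧ c i ≠ c j := by
  induction n with
  | zero =>
    exact ⟨Fin.elim0, fun p ⟨i, _, _⟩ => i.elim0⟩
  | succ n ih =>

    -- choose i0 with maximal left endpoint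
    obtain ⟨i0, -, hi0max⟩ := Finset.exists_max_image (Finset.univ : Finset (Fin (n+1))) a
      ⟨0, Finset.mem_univ 0⟩
    set a' : Fin n → ℝ := fun k => a (i0.succAbove k) with ha'
    set b' : Fin n → ℝ := fun k => b (i0.succAbove k) with hb'
    obtain ⟨c', hc'⟩ := ih a' b' (fun k => hab _)
    by_cases hex : ∃ k : Fin n, a i0 ≤ b' k
    · -- there is an interval (other than i0) reaching past a i0; pick one with max right end
      have hne : (Finset.univ.filter fun k : Fin n => a i0 ≤ b' k).Nonempty := by
        obtain ⟨k, hk⟩ := hex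
        exact ⟨k, Finset.mem_filter.2 ⟨Finset.mem_univ _, hk⟩⟩
      obtain ⟨k0, hk0mem, hk0max⟩ :=
        Finset.exists_max_image (Finset.univ.filter fun k : Fin n => a i0 ≤ b' k) b' hne
      have hk0 : a i0 ≤ b' k0 := (Finset.mem_filter.1 hk0mem).2
      refine ⟨fun i => (finSuccEquiv' i0 i).elim (c' k0 + 1) c', fun p hp => ?_⟩
      obtain ⟨i, j, hij, hpi, hpj⟩ := hp
      by_cases hpc : p ∈ Set.Icc (a i0) (b i0)
      · -- use i0 and the max interval k0
        -- one of i, j differs from i0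
        have hm : ∃ m : Fin (n+1), m ≠ i0 ∧ p ∈ Set.Icc (a m) (b m) := by
          rcases eq_or_ne i i0 with h | h
          · exact ⟨j, by rintro rfl; exact hij h, hpj⟩
          · exact ⟨i, h, hpi⟩
        obtain ⟨m, hmne, hpm⟩ := hm
        obtain ⟨k, rfl⟩ := Fin.exists_succAbove_eq hmne
        have hkb : a i0 ≤ b' k := le_trans hpc.1 hpm.2
        have hb'k0 : p ≤ b' k0 := le_trans hpm.2
          (hk0max k (Finset.mem_filter.2 ⟨Finset.mem_univ _, hkb⟩))
        have ha'k0 : a' k0 ≤ p := le_trans (hi0max _ (Finset.mem_univ _)) hpc.1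
        refine ⟨i0, i0.succAbove k0, hpc, ⟨ha'k0, hb'k0⟩, ?_⟩
        simp only [finSuccEquiv'_at, finSuccEquiv'_succAbove, Option.elim]
        revert hij
        generalize c' k0 = t
        intro _
        revert t; decide
      · -- both witnesses avoid i0; use induction hypothesis
        have hine : i ≠ i0 := by rintro rfl; exact hpc hpi
        have hjne : j ≠ i0 := by rintro rfl; exact hpc hpj
        obtain ⟨ki, rfl⟩ := Fin.exists_succAbove_eq hine
        obtain ⟨kj, rfl⟩ := Fin.exists_succAbove_eq hjne
        have hkij : ki ≠ kj := fun h => hij (by rw [h])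
        obtain ⟨u, v, hu, hv, huv⟩ := hc' p ⟨ki, kj, hkij, hpi, hpj⟩
        refine ⟨i0.succAbove u, i0.succAbove v, hu, hv, ?_⟩
        simpa only [finSuccEquiv'_succAbove, Option.elim] using huv
    · -- i0's interval is disjoint (in the relevant sense) from all others
      refine ⟨fun i => (finSuccEquiv' i0 i).elim 0 c', fun p hp => ?_⟩
      obtain ⟨i, j, hij, hpi, hpj⟩ := hp
      have hpc : p ∉ Set.Icc (a i0) (b i0) := by
        intro hpc
        have hm : ∃ m : Fin (n+1), m ≠ i0 ∧ p ∈ Set.Icc (a m) (b m) := by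
          rcases eq_or_ne i i0 with h | h
          · exact ⟨j, by rintro rfl; exact hij h, hpj⟩
          · exact ⟨i, h, hpi⟩
        obtain ⟨m, hmne, hpm⟩ := hm
        obtain ⟨k, rfl⟩ := Fin.exists_succAbove_eq hmne
        exact hex ⟨k, le_trans hpc.1 hpm.2⟩
      have hine : i ≠ i0 := by rintro rfl; exact hpc hpi
      have hjne : j ≠ i0 := by rintro rfl; exact hpc hpj
      obtain ⟨ki, rfl⟩ := Fin.exists_succAbove_eq hine
      obtain ⟨kj, rfl⟩ := Fin.exists_succAbove_eq hjne
      have hkij : ki ≠ kj := fun h => hij (by rw [h])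
      obtain ⟨u, v, hu, hv, huv⟩ := hc' p ⟨ki, kj, hkij, hpi, hpj⟩
      refine ⟨i0.succAbove u, i0.succAbove v, hu, hv, ?_⟩
      simpa only [finSuccEquiv'_succAbove, Option.elim] using huv
end

section
/- For every finite family of nonempty closed bounded intervals in the real line, i.e. intervals I_1, ..., I_n with I_i = [a_i, b_i] and a_i ≤ b_i, there exists a coloring c : {1,...,n} → {0,1,2} with three colors that is conflict-free: for every point p ∈ ℝ contained in at least one interval, there exists an index i with p ∈ I_i such that c(j) ≠ c(i) for every j ≠ i with p ∈ I_j. -/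
/-- Any finite family of nonempty closed bounded intervals in ℝ admits a
conflict-free coloring with three colors: every point contained in at least one
interval is contained in an interval whose color differs from the color of every
other interval containing the point. -/
theorem cf_coloring_intervals_three_colors
    (n : ℕ) (a b : Fin n → ℝ) (hab : ∀ i, a i ≤ b i) :
    ∃ c : Fin n → Fin 3,
      ∀ p : ℝ,
        (∃ i : Fin n, p ∈ Set.Icc (a i) (b i)) →
        ∃ i : Fin n, p ∈ Set.Icc (a i) (b i) ∧
          ∀ j : Fin n, j ≠ i → p ∈ Set.Icc (a j) (b j) → c j ≠ c i := by
  classical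
  -- `Cov S` : the subfamily indexed by `S` covers the union of all intervals
  set Cov : Finset (Fin n) → Prop :=
    fun S => ∀ q : ℝ, ∀ i : Fin n, q ∈ Set.Icc (a i) (b i) →
      ∃ j ∈ S, q ∈ Set.Icc (a j) (b j) with hCovDef
  have huniv : Cov Finset.univ := fun q i hq => ⟨i, Finset.mem_univ i, hq⟩
  have hne : (Finset.univ.powerset.filter Cov).Nonempty :=
    ⟨Finset.univ, Finset.mem_filter.2 ⟨Finset.mem_powerset.2 le_rfl, huniv⟩⟩
  -- choose a cover of minimum cardinality
  obtain ⟨S, hSmem, hmin⟩ := Finset.exists_min_image _ Finset.card hne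
  have hScov : Cov S := (Finset.mem_filter.1 hSmem).2
  have hmincard : ∀ T : Finset (Fin n), Cov T → S.card ≤ T.card := by
    intro T hT
    exact hmin T (Finset.mem_filter.2 ⟨Finset.mem_powerset.2 (Finset.subset_univ T), hT⟩)
  have herase : ∀ i ∈ S, ¬ Cov (S.erase i) := by
    intro i hi hC
    have h1 := hmincard _ hC
    have h2 : (S.erase i).card < S.card := Finset.card_erase_lt_of_mem hi
    omega
  -- no interval in S is contained in another interval of S
  have hnc : ∀ i ∈ S, ∀ j ∈ S, i ≠ j → ¬(a j ≤ a i ∧ b i ≤ b j) := by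
    rintro i hi j hj hij ⟨h1, h2⟩
    apply herase i hi
    intro q k hq
    obtain ⟨w, hw, hqw⟩ := hScov q k hq
    by_cases hwi : w = i
    · subst hwi
      exact ⟨j, Finset.mem_erase.2 ⟨Ne.symm hij, hj⟩, ⟨h1.trans hqw.1, hqw.2.trans h2⟩⟩
    · exact ⟨w, Finset.mem_erase.2 ⟨hwi, hw⟩, hqw⟩
  have hmono : ∀ i ∈ S, ∀ j ∈ S, i ≠ j → a i < a j → b i < b j := by
    intro i hi j hj hij hA
    by_contra hB
    exact hnc j hj i hi (Ne.symm hij) ⟨hA.le, le_of_not_gt hB⟩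
  have hainj : ∀ i ∈ S, ∀ j ∈ S, i ≠ j → a i ≠ a j := by
    intro i hi j hj hij he
    rcases le_total (b i) (b j) with h | h
    · exact hnc i hi j hj hij ⟨he.ge, h⟩
    · exact hnc j hj i hi (Ne.symm hij) ⟨he.le, h⟩
  -- depth of the minimum cover is at most 2
  have hdepth : ∀ p : ℝ, ∀ i ∈ S, ∀ j ∈ S, ∀ k ∈ S,
      p ∈ Set.Icc (a i) (b i) → p ∈ Set.Icc (a j) (b j) → p ∈ Set.Icc (a k) (b k) →
      a i < a j → a j < a k → False := by
    intro p i hi j hj k hk hpi hpj hpk h1 h2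
    apply herase j hj
    intro q m hq
    obtain ⟨w, hw, hqw⟩ := hScov q m hq
    by_cases hwj : w = j
    · rw [hwj] at hqw
      rcases le_total q p with hqp | hpq
      · exact ⟨i, Finset.mem_erase.2 ⟨fun h => h1.ne (congrArg a h), hi⟩,
          ⟨h1.le.trans hqw.1, hqp.trans hpi.2⟩⟩
      · exact ⟨k, Finset.mem_erase.2 ⟨fun h => h2.ne (congrArg a h).symm, hk⟩,
          ⟨hpk.1.trans hpq,
            hqw.2.trans (hmono j hj k hk (fun h => h2.ne (congrArg a h)) h2).le⟩⟩
    · exact ⟨w, Finset.mem_erase.2 ⟨hwj, hw⟩, hqw⟩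
  -- rank of an interval of S : number of intervals of S strictly to its left
  set r : Fin n → ℕ := fun i => (S.filter (fun u => a u < a i)).card with hrdef
  refine ⟨fun i => if i ∈ S then (if Even (r i) then 1 else 2) else 0, ?_⟩
  intro p hp
  obtain ⟨i0, hpi0⟩ := hp
  obtain ⟨s, hsS, hps⟩ := hScov p i0 hpi0
  set T := S.filter (fun u => p ∈ Set.Icc (a u) (b u)) with hTdef
  have hTne : T.Nonempty := ⟨s, Finset.mem_filter.2 ⟨hsS, hps⟩⟩
  obtain ⟨i, hiT, hmini⟩ := Finset.exists_min_image T a hTne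
  have hiS : i ∈ S := (Finset.mem_filter.1 hiT).1
  have hpi : p ∈ Set.Icc (a i) (b i) := (Finset.mem_filter.1 hiT).2
  refine ⟨i, hpi, ?_⟩
  intro j hji hpj
  by_cases hjS : j ∈ S
  · -- j is in the cover as well; its rank is r i + 1, so colors 1/2 differ
    have hjT : j ∈ T := Finset.mem_filter.2 ⟨hjS, hpj⟩
    have haij : a i < a j :=
      lt_of_le_of_ne (hmini j hjT) (hainj i hiS j hjS (Ne.symm hji))
    have hset : S.filter (fun u => a u < a j) = insert i (S.filter (fun u => a u < a i)) := by
      ext u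
      simp only [Finset.mem_filter, Finset.mem_insert]
      constructor
      · rintro ⟨huS, hua⟩
        by_cases hui : u = i
        · exact Or.inl hui
        · refine Or.inr ⟨huS, ?_⟩
          rcases lt_trichotomy (a u) (a i) with h | h | h
          · exact h
          · exact absurd h (hainj u huS i hiS hui)
          · exfalso
            have hpu : p ∈ Set.Icc (a u) (b u) :=
              ⟨hua.le.trans hpj.1,
                hpi.2.trans (hmono i hiS u huS (fun e => h.ne (congrArg a e)) h).le⟩
            exact hdepth p i hiS u huS j hjS hpi hpu hpj h hua
      · rintro (rfl | ⟨huS, hu⟩)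
        · exact ⟨hiS, haij⟩
        · exact ⟨huS, hu.trans haij⟩
    have hinotmem : i ∉ S.filter (fun u => a u < a i) := by
      simp [Finset.mem_filter]
    have hrj : r j = r i + 1 := by
      simp only [hrdef]
      rw [hset, Finset.card_insert_of_notMem hinotmem]
    simp only [if_pos hjS, if_pos hiS]
    rcases Nat.even_or_odd (r i) with he | ho
    · rw [if_pos he, if_neg (by simp [hrj, Nat.even_add_one, he])]
      decide
    · have ho' : ¬ Even (r i) := Nat.not_even_iff_odd.2 ho
      rw [if_neg ho', if_pos (by simp [hrj, Nat.even_add_one, ho'])]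
      decide
  · -- j outside the cover has color 0, while i has color 1 or 2
    simp only [if_neg hjS, if_pos hiS]
    split <;> decide
end

section
/- For every finite family of nonempty closed bounded intervals I_1, ..., I_n in ℝ (I_i = [a_i, b_i], a_i ≤ b_i) there exists a coloring c : {1,...,n} → {red, blue, grey} such that: (1) every point p ∈ ℝ is contained in at most one red interval; (2) every point p ∈ ℝ is contained in at most one blue interval; and (3) every point p that is contained in at least one of the intervals is contained in a red interval or in a blue interval. (In particular such a coloring is conflict-free.) -/
/-- Colors used by the chain method: red, blue, and a dummy color grey. -/
inductive ChainColor : Type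
  | red : ChainColor
  | blue : ChainColor
  | grey : ChainColor

/-- The chain method for intervals in ℝ: there is a coloring with colors red,
blue and grey such that every point lies in at most one red interval, at most
one blue interval, and every covered point lies in a red or a blue interval. -/
theorem chain_method_cf_structure
    (n : ℕ) (a b : Fin n → ℝ) (hab : ∀ i, a i ≤ b i) :
    ∃ c : Fin n → ChainColor,
      (∀ p : ℝ, ∀ i j : Fin n, c i = ChainColor.red → c j = ChainColor.red →
        p ∈ Set.Icc (a i) (b i) → p ∈ Set.Icc (a j) (b j) → i = j) ∧
      (∀ p : ℝ, ∀ i j : Fin n, c i = ChainColor.blue → c j = ChainColor.blue →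
        p ∈ Set.Icc (a i) (b i) → p ∈ Set.Icc (a j) (b j) → i = j) ∧
      (∀ p : ℝ, (∃ i : Fin n, p ∈ Set.Icc (a i) (b i)) →
        ∃ i : Fin n, p ∈ Set.Icc (a i) (b i) ∧
          (c i = ChainColor.red ∨ c i = ChainColor.blue)) := by
  classical
  suffices H : ∀ s : Finset (Fin n), ∃ c : Fin n → ChainColor,
      (∀ p : ℝ, ∀ i j : Fin n, c i = ChainColor.red → c j = ChainColor.red →
        p ∈ Set.Icc (a i) (b i) → p ∈ Set.Icc (a j) (b j) → i = j) ∧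
      (∀ p : ℝ, ∀ i j : Fin n, c i = ChainColor.blue → c j = ChainColor.blue →
        p ∈ Set.Icc (a i) (b i) → p ∈ Set.Icc (a j) (b j) → i = j) ∧
      (∀ p : ℝ, (∃ i ∈ s, p ∈ Set.Icc (a i) (b i)) →
        ∃ i : Fin n, p ∈ Set.Icc (a i) (b i) ∧
          (c i = ChainColor.red ∨ c i = ChainColor.blue)) by
    obtain ⟨c, h1, h2, h3⟩ := H Finset.univ
    exact ⟨c, h1, h2, fun p ⟨i, hi⟩ => h3 p ⟨i, Finset.mem_univ i, hi⟩⟩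
  intro s
  induction s using Finset.strongInduction with
  | _ s ih =>
  by_cases hcase : ∃ i ∈ s, ∀ p ∈ Set.Icc (a i) (b i),
      ∃ j ∈ s, j ≠ i ∧ p ∈ Set.Icc (a j) (b j)
  · obtain ⟨i, his, hi⟩ := hcase
    obtain ⟨c, h1, h2, h3⟩ := ih (s.erase i) (Finset.erase_ssubset his)
    refine ⟨c, h1, h2, fun p ⟨j, hjs, hpj⟩ => ?_⟩
    by_cases hji : j = i
    · obtain ⟨k, hks, hki, hpk⟩ := hi p (hji ▸ hpj)
      exact h3 p ⟨k, Finset.mem_erase.2 ⟨hki, hks⟩, hpk⟩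
    · exact h3 p ⟨j, Finset.mem_erase.2 ⟨hji, hjs⟩, hpj⟩
  · push_neg at hcase
    -- hcase : ∀ i ∈ s, ∃ p ∈ Icc (a i) (b i), ∀ j ∈ s, j ≠ i → p ∉ Icc (a j) (b j)
    -- No interval of s is contained in another.
    have hnc : ∀ i ∈ s, ∀ j ∈ s, i ≠ j →
        ¬ (Set.Icc (a i) (b i) ⊆ Set.Icc (a j) (b j)) := by
      intro i hi j hj hij hsub
      obtain ⟨p, hp, hpall⟩ := hcase i hi
      exact hpall j hj (Ne.symm hij) (hsub hp)
    have ha_ne : ∀ i ∈ s, ∀ j ∈ s, i ≠ j → a i ≠ a j := by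
      intro i hi j hj hij hEq
      rcases le_total (b i) (b j) with h | h
      · exact hnc i hi j hj hij (Set.Icc_subset_Icc hEq.ge h)
      · exact hnc j hj i hi (Ne.symm hij) (Set.Icc_subset_Icc hEq.le h)
    have hmono : ∀ i ∈ s, ∀ j ∈ s, a i < a j → b i < b j := by
      intro i hi j hj hij
      by_contra h
      push_neg at h
      exact hnc j hj i hi (fun hEq => absurd (congrArg a hEq) (ne_of_lt hij).symm)
        (Set.Icc_subset_Icc (le_of_lt hij) h)
    have hkey : ∀ i ∈ s, ∀ j ∈ s, ∀ k ∈ s, a i < a j → a j < a k → b i < a k := by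
      intro i hi j hj k hk hij hjk
      by_contra h
      push_neg at h  -- h : a k ≤ b i
      obtain ⟨p, hp, hpall⟩ := hcase j hj
      have hji : i ≠ j := fun hEq => absurd (congrArg a hEq) (ne_of_lt hij)
      have hjk' : k ≠ j := fun hEq => absurd (congrArg a hEq) (Ne.symm (ne_of_lt hjk))
      rcases le_or_gt p (b i) with hpb | hpb
      · exact hpall i hi hji ⟨le_trans (le_of_lt hij) hp.1, hpb⟩
      · have : b j < b k := hmono j hj k hk hjk
        exact hpall k hk hjk' ⟨le_trans h (le_of_lt hpb), le_trans hp.2 (le_of_lt this)⟩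
    set r : Fin n → ℕ := fun i => (s.filter (fun j => a j < a i)).card with hr
    -- two intervals of s whose ranks have equal parity are disjoint
    have hdisj : ∀ i ∈ s, ∀ j ∈ s, a i < a j → r i % 2 = r j % 2 →
        ∀ p : ℝ, p ∈ Set.Icc (a i) (b i) → p ∈ Set.Icc (a j) (b j) → False := by
      intro i hi j hj hij hpar p hpi hpj
      have hsub : s.filter (fun k => a k < a i) ⊂ s.filter (fun k => a k < a j) := by
        refine ⟨fun k hk => ?_, ?_⟩
        · rw [Finset.mem_filter] at hk ⊢
          exact ⟨hk.1, lt_trans hk.2 hij⟩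
        intro hcon
        have : i ∈ s.filter (fun k => a k < a i) :=
          hcon (Finset.mem_filter.2 ⟨hi, hij⟩)
        exact absurd (Finset.mem_filter.1 this).2 (lt_irrefl _)
      have hrlt : r i < r j := Finset.card_lt_card hsub
      -- there must be k with a i < a k < a j, otherwise r j = r i + 1
      have hex : ∃ k ∈ s, a i < a k ∧ a k < a j := by
        by_contra hno
        push_neg at hno
        have hfe : s.filter (fun k => a k < a j)
            = insert i (s.filter (fun k => a k < a i)) := by
          ext k
          simp only [Finset.mem_filter, Finset.mem_insert]
          constructor
          · rintro ⟨hks, hkj⟩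
            rcases lt_trichotomy (a k) (a i) with h | h | h
            · exact Or.inr ⟨hks, h⟩
            · left
              by_contra hki
              exact ha_ne k hks i hi hki h
            · exact absurd hkj (not_lt.2 (hno k hks h))
          · rintro (rfl | ⟨hks, hki⟩)
            · exact ⟨hi, hij⟩
            · exact ⟨hks, lt_trans hki hij⟩
        have hni : i ∉ s.filter (fun k => a k < a i) := by
          simp [Finset.mem_filter]
        have : r j = r i + 1 := by
          rw [hr]
          simp only
          rw [hfe, Finset.card_insert_of_notMem hni]
        omega
      obtain ⟨k, hks, hik, hkj⟩ := hex
      have : b i < a j := hkey i hi k hks j hj hik hkj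
      linarith [hpi.2, hpj.1]
    refine ⟨fun i => if i ∈ s then
        (if r i % 2 = 0 then ChainColor.red else ChainColor.blue)
      else ChainColor.grey, ?_, ?_, ?_⟩
    · intro p i j hci hcj hpi hpj
      by_contra hij
      have his : i ∈ s := by
        by_contra h; simp only [h, if_false] at hci; exact ChainColor.noConfusion hci
      have hjs : j ∈ s := by
        by_contra h; simp only [h, if_false] at hcj; exact ChainColor.noConfusion hcj
      simp only [his, hjs, if_true] at hci hcj
      have hri : r i % 2 = 0 := by
        by_contra h; simp only [h, if_false] at hci; exact ChainColor.noConfusion hci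
      have hrj : r j % 2 = 0 := by
        by_contra h; simp only [h, if_false] at hcj; exact ChainColor.noConfusion hcj
      rcases lt_trichotomy (a i) (a j) with h | h | h
      · exact hdisj i his j hjs h (hri.trans hrj.symm) p hpi hpj
      · exact ha_ne i his j hjs hij h
      · exact hdisj j hjs i his h (hrj.trans hri.symm) p hpj hpi
    · intro p i j hci hcj hpi hpj
      by_contra hij
      have his : i ∈ s := by
        by_contra h; simp only [h, if_false] at hci; exact ChainColor.noConfusion hci
      have hjs : j ∈ s := by
        by_contra h; simp only [h, if_false] at hcj; exact ChainColor.noConfusion hcj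
      simp only [his, hjs, if_true] at hci hcj
      have hri : ¬ (r i % 2 = 0) := by
        by_contra h
        simp only [h, if_true] at hci; exact ChainColor.noConfusion hci
      have hrj : ¬ (r j % 2 = 0) := by
        by_contra h
        simp only [h, if_true] at hcj; exact ChainColor.noConfusion hcj
      have hpar : r i % 2 = r j % 2 := by omega
      rcases lt_trichotomy (a i) (a j) with h | h | h
      · exact hdisj i his j hjs h hpar p hpi hpj
      · exact ha_ne i his j hjs hij h
      · exact hdisj j hjs i his h hpar.symm p hpj hpi
    · rintro p ⟨i, his, hpi⟩
      refine ⟨i, hpi, ?_⟩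
      simp only [his, if_true]
      by_cases h : r i % 2 = 0
      · simp [h]
      · simp [h]
end

section
/- Let h ≥ 1 and identify the leaves of the complete binary tree of height h with the functions f : {0,...,h-1} → {0,1}. For each m with 0 ≤ m ≤ h and each s : {0,...,m-1} → {0,1}, let E_s = { f : f(i) = s(i) for all i < m } be the set of leaves extending the prefix s. Suppose c : ({0,...,h-1} → {0,1}) → ℕ is a coloring such that for every prefix s (including the empty prefix) there exists f ∈ E_s with c(g) ≠ c(f) for all g ∈ E_s with g ≠ f. Then c uses at least h distinct colors, i.e. the image of c has cardinality at least h. -/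
section Aux

variable (h : ℕ) (c : (Fin h → Fin 2) → ℕ)
    (hcf : ∀ (m : ℕ) (hm : m ≤ h) (s : Fin m → Fin 2),
      ∃ f : Fin h → Fin 2,
        (∀ i : Fin m, f (Fin.castLE hm i) = s i) ∧
        ∀ g : Fin h → Fin 2,
          (∀ i : Fin m, g (Fin.castLE hm i) = s i) → g ≠ f → c g ≠ c f)

noncomputable def cfB : ℕ → Fin 2
  | m =>
    if hm : m < h then
      1 - (Classical.choose (hcf m hm.le (fun i : Fin m => cfB i.val))) ⟨m, hm⟩
    else 0
  termination_by m => m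
  decreasing_by all_goals exact i.isLt

noncomputable def cfF (m : ℕ) (hm : m ≤ h) : Fin h → Fin 2 :=
  Classical.choose (hcf m hm (fun i : Fin m => cfB h c hcf i.val))

lemma cfF_spec (m : ℕ) (hm : m ≤ h) :
    (∀ i : Fin m, cfF h c hcf m hm (Fin.castLE hm i) = cfB h c hcf i.val) ∧
    ∀ g : Fin h → Fin 2,
      (∀ i : Fin m, g (Fin.castLE hm i) = cfB h c hcf i.val) →
        g ≠ cfF h c hcf m hm → c g ≠ c (cfF h c hcf m hm) :=
  Classical.choose_spec (hcf m hm (fun i : Fin m => cfB h c hcf i.val))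

lemma cfB_eq (m : ℕ) (hm : m < h) :
    cfB h c hcf m = 1 - cfF h c hcf m hm.le ⟨m, hm⟩ := by
  rw [cfB]
  simp [hm, cfF]

end Aux

/-- Lower bound for conflict-free colorings of root-to-leaf paths in a complete
binary tree of height `h`: if a coloring of the leaves (identified with
functions `Fin h → Fin 2`) is such that every prefix set `E_s` contains a leaf
of unique color within `E_s`, then the coloring uses at least `h` colors. -/
theorem cf_binary_tree_paths_lower_bound
    (h : ℕ) (hh : 1 ≤ h) (c : (Fin h → Fin 2) → ℕ)
    (hcf : ∀ (m : ℕ) (hm : m ≤ h) (s : Fin m → Fin 2),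
      ∃ f : Fin h → Fin 2,
        (∀ i : Fin m, f (Fin.castLE hm i) = s i) ∧
        ∀ g : Fin h → Fin 2,
          (∀ i : Fin m, g (Fin.castLE hm i) = s i) → g ≠ f → c g ≠ c f) :
    h ≤ (Finset.univ.image c).card := by
  set F : ∀ m : ℕ, m ≤ h → (Fin h → Fin 2) := cfF h c hcf with hF
  -- key: for i < j ≤ h, c (F j) ≠ c (F i)
  have key : ∀ (i j : ℕ) (hij : i < j) (hj : j ≤ h),
      c (F j hj) ≠ c (F i (le_of_lt (lt_of_lt_of_le hij hj))) := by
    intro i j hij hj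
    have hi : i ≤ h := le_of_lt (lt_of_lt_of_le hij hj)
    have hih : i < h := lt_of_lt_of_le hij hj
    have hFj := (cfF_spec h c hcf j hj).1
    have hFi1 := (cfF_spec h c hcf i hi).1
    have hFi2 := (cfF_spec h c hcf i hi).2
    -- F j extends the prefix of length i
    have hext : ∀ k : Fin i, F j hj (Fin.castLE hi k) = cfB h c hcf k.val := by
      intro k
      have := hFj (Fin.castLE hij.le k)
      simpa using this
    -- F j ≠ F i: they differ at coordinate i
    have hne : F j hj ≠ F i hi := by
      intro heq
      have h1 : F j hj (Fin.castLE hj ⟨i, hij⟩) = cfB h c hcf i := hFj ⟨i, hij⟩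
      have h2 : cfB h c hcf i = 1 - F i hi ⟨i, hih⟩ := cfB_eq h c hcf i hih
      have hcast : Fin.castLE hj (⟨i, hij⟩ : Fin j) = (⟨i, hih⟩ : Fin h) := rfl
      rw [hcast, heq, h2] at h1
      revert h1
      exact fun h1 => by
        have : ∀ x : Fin 2, x ≠ 1 - x := by decide
        exact this _ h1
    exact hFi2 (F j hj) hext hne
  -- the colors c (F m) for m ≤ h, m in 1..h, are distinct
  classical
  have hinj : Function.Injective (fun m : Fin h => c (F m.val m.isLt.le)) := by
    intro a b hab
    by_contra hne
    rcases lt_or_gt_of_ne (fun e => hne (Fin.ext e) : (a:ℕ) ≠ b) with hlt | hlt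
    · exact key a b hlt b.isLt.le hab.symm
    · exact key b a hlt a.isLt.le hab
  have hsub : Finset.univ.image (fun m : Fin h => c (F m.val m.isLt.le)) ⊆
      Finset.univ.image c := by
    intro x hx
    simp only [Finset.mem_image, Finset.mem_univ, true_and] at hx ⊢
    rcases hx with ⟨m, hm⟩
    exact ⟨_, hm⟩
  calc h = Fintype.card (Fin h) := (Fintype.card_fin h).symm
    _ = (Finset.univ.image (fun m : Fin h => c (F m.val m.isLt.le))).card := by
        rw [Finset.card_image_of_injective _ hinj, Finset.card_univ]
    _ ≤ (Finset.univ.image c).card := Finset.card_le_card hsub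
end

section
/- Let n ≥ 1 and let c : {0,...,n-1} → ℕ be a coloring such that for all a ≤ b < n the discrete interval {i : a ≤ i ≤ b} contains an index whose color is different from the colors of all other indices in that interval. Then c uses at least ⌊log₂ n⌋ + 1 distinct colors. -/
private lemma cf_aux : ∀ m : ℕ, ∀ a : ℕ, ∀ c : ℕ → ℕ, 1 ≤ m →
    (∀ x y : ℕ, a ≤ x → x ≤ y → y < a + m →
      ∃ i, x ≤ i ∧ i ≤ y ∧ ∀ j, x ≤ j → j ≤ y → j ≠ i → c j ≠ c i) →
    Nat.log 2 m + 1 ≤ ((Finset.Ico a (a + m)).image c).card := by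
  intro m
  induction m using Nat.strong_induction_on with
  | _ m IH =>
    intro a c hm hcf
    obtain ⟨i, hai, hib, huniq⟩ := hcf a (a + m - 1) le_rfl (by omega) (by omega)
    by_cases h1 : m = 1
    · subst h1
      simp only [Nat.log_one_right, zero_add]
      exact Finset.card_pos.mpr ((Finset.nonempty_Ico.mpr (by omega)).image c)
    -- m ≥ 2
    set m₁ := i - a with hm₁
    set m₂ := a + m - 1 - i with hm₂
    have hsum : m₁ + m₂ = m - 1 := by omega
    -- choose the larger side: interval [a', a'+m')
    obtain ⟨a', m', ha'1, ha'2, hm'pos, hm'lt, h2m', hinot⟩ :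
        ∃ a' m', a ≤ a' ∧ a' + m' ≤ a + m ∧ 1 ≤ m' ∧ m' < m ∧ m ≤ 2 * m' + 1 ∧
          (i < a' ∨ a' + m' ≤ i) := by
      rcases le_or_gt m₁ m₂ with h | h
      · exact ⟨i + 1, m₂, by omega, by omega, by omega, by omega, by omega, by omega⟩
      · exact ⟨a, m₁, le_rfl, by omega, by omega, by omega, by omega, by omega⟩
    have hcf' : ∀ x y : ℕ, a' ≤ x → x ≤ y → y < a' + m' →
        ∃ k, x ≤ k ∧ k ≤ y ∧ ∀ j, x ≤ j → j ≤ y → j ≠ k → c j ≠ c k := by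
      intro x y hx hxy hy
      exact hcf x y (le_trans ha'1 hx) hxy (by omega)
    have hIH := IH m' hm'lt a' c hm'pos hcf'
    have hnotmem : c i ∉ (Finset.Ico a' (a' + m')).image c := by
      simp only [Finset.mem_image, Finset.mem_Ico, not_exists, not_and]
      rintro j ⟨hj1, hj2⟩
      exact huniq j (by omega) (by omega) (by omega)
    have hsub : insert (c i) ((Finset.Ico a' (a' + m')).image c) ⊆
        (Finset.Ico a (a + m)).image c := by
      intro z hz
      rcases Finset.mem_insert.mp hz with rfl | hz
      · exact Finset.mem_image_of_mem c (Finset.mem_Ico.mpr ⟨hai, by omega⟩)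
      · obtain ⟨j, hj, rfl⟩ := Finset.mem_image.mp hz
        rw [Finset.mem_Ico] at hj
        exact Finset.mem_image_of_mem c (Finset.mem_Ico.mpr ⟨by omega, by omega⟩)
    have hcard : Nat.log 2 m' + 2 ≤ ((Finset.Ico a (a + m)).image c).card := by
      calc Nat.log 2 m' + 2 ≤ ((Finset.Ico a' (a' + m')).image c).card + 1 := by omega
        _ = (insert (c i) ((Finset.Ico a' (a' + m')).image c)).card := by
            rw [Finset.card_insert_of_notMem hnotmem]
        _ ≤ _ := Finset.card_le_card hsub
    have hlog : Nat.log 2 m ≤ Nat.log 2 m' + 1 := by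
      have h1 : m' < 2 ^ (Nat.log 2 m' + 1) := Nat.lt_pow_succ_log_self (by norm_num) m'
      have h2 : m < 2 ^ (Nat.log 2 m' + 2) := by
        have : 2 ^ (Nat.log 2 m' + 2) = 2 * 2 ^ (Nat.log 2 m' + 1) := by ring
        omega
      have := Nat.log_lt_of_lt_pow (by omega : m ≠ 0) h2
      omega
    omega

/-- Lower bound for conflict-free colorings of the points `0, …, n-1` with
respect to discrete intervals: if every nonempty interval `{i : a ≤ i ≤ b}`
contains an index of unique color within the interval, then at least
`⌊log₂ n⌋ + 1` colors are used. -/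
theorem cf_points_intervals_lower_bound
    (n : ℕ) (hn : 1 ≤ n) (c : Fin n → ℕ)
    (hcf : ∀ a b : Fin n, a ≤ b →
      ∃ i : Fin n, a ≤ i ∧ i ≤ b ∧
        ∀ j : Fin n, a ≤ j → j ≤ b → j ≠ i → c j ≠ c i) :
    Nat.log 2 n + 1 ≤ (Finset.univ.image c).card := by
  set c' : ℕ → ℕ := fun k => if h : k < n then c ⟨k, h⟩ else 0 with hc'
  have hcf' : ∀ x y : ℕ, 0 ≤ x → x ≤ y → y < 0 + n →
      ∃ i, x ≤ i ∧ i ≤ y ∧ ∀ j, x ≤ j → j ≤ y → j ≠ i → c' j ≠ c' i := by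
    intro x y _ hxy hy
    have hyn : y < n := by omega
    have hxn : x < n := by omega
    obtain ⟨i, hxi, hiy, huniq⟩ := hcf ⟨x, hxn⟩ ⟨y, hyn⟩ hxy
    refine ⟨i.val, hxi, hiy, ?_⟩
    intro j hj1 hj2 hj3
    have hjn : j < n := by omega
    have := huniq ⟨j, hjn⟩ hj1 hj2 (by simpa [Fin.ext_iff] using hj3)
    simpa [hc', hjn, i.isLt] using this
  have := cf_aux n 0 c' hn hcf'
  have heq : (Finset.Ico 0 (0 + n)).image c' = Finset.univ.image c := by
    ext z
    simp only [Finset.mem_image, Finset.mem_Ico, Finset.mem_univ, true_and, zero_add]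
    constructor
    · rintro ⟨k, hk, rfl⟩
      exact ⟨⟨k, hk.2⟩, by simp [hc', hk.2]⟩
    · rintro ⟨j, rfl⟩
      exact ⟨j.val, ⟨Nat.zero_le _, j.isLt⟩, by simp [hc', j.isLt]⟩
  rwa [heq] at this
end

section
/- Let (X, d) be a metric space, let p_1, ..., p_n ∈ X be centers and r_1, ..., r_n ∈ ℝ radii, and for x ∈ X define the coverage cov_x(i) = r_i − d(p_i, x). Let x, y ∈ X and let i be an index such that d(x, p_i) = d(x, y) + d(y, p_i) (y lies on a geodesic from x to p_i) and such that i is the tie-broken maximizer of coverage at x, i.e. for every j ≠ i either cov_x(j) < cov_x(i), or cov_x(j) = cov_x(i) and i < j. Then i is also the tie-broken maximizer of coverage at y: for every j ≠ i, either cov_y(j) < cov_y(i), or cov_y(j) = cov_y(i) and i < j. -/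
/-- If `i` is the tie-broken maximizer of the coverage `cov_x(j) = r j − d(p j, x)`
at `x`, and `y` lies on a geodesic from `x` to the center `p i`, then `i` is
also the tie-broken maximizer of coverage at `y`. -/
theorem assigned_ball_along_geodesic
    {X : Type*} [MetricSpace X] (n : ℕ) (p : Fin n → X) (r : Fin n → ℝ)
    (x y : X) (i : Fin n)
    (hgeo : dist x (p i) = dist x y + dist y (p i))
    (hmax : ∀ j : Fin n, j ≠ i →
      (r j - dist (p j) x < r i - dist (p i) x) ∨
      (r j - dist (p j) x = r i - dist (p i) x ∧ i < j)) :
    ∀ j : Fin n, j ≠ i →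
      (r j - dist (p j) y < r i - dist (p i) y) ∨
      (r j - dist (p j) y = r i - dist (p i) y ∧ i < j) := by
  intro j hj
  have hi : dist (p i) y = dist (p i) x - dist x y := by
    rw [dist_comm (p i) y, dist_comm (p i) x]
    linarith [hgeo]
  have hjtri : dist (p j) x ≤ dist (p j) y + dist y x := dist_triangle _ _ _
  rw [dist_comm y x] at hjtri
  rcases hmax j hj with h | ⟨h, hlt⟩
  · left; rw [hi]; linarith
  · rcases lt_or_eq_of_le (show r j - dist (p j) y ≤ r i - dist (p i) y by
      rw [hi]; linarith) with h' | h'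
    · left; exact h'
    · right; exact ⟨h', hlt⟩
end
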